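/- arXiv:1806.07648 — 2 statements merged into one kernel-verified Lean document; each statement's English description precedes it below -/
import Mathlib

section
/- Let Q be the degree-6 polynomial 2³ · det M(k)/(2!·4!·6!) with M(k) the 3×3 Verlinde matrix for g = 3. Then every complex root of Q has real part lying in the interval [-12/7, -2/7]. -/
/-!
Expanding the determinant gives `Q 3 z = w (14 w² + 20 w + 11) / 45` with `w = (z + 1)²`.
The quadratic factor has negative discriminant, so its roots have `w.re = -5/7 < 0` and
`w.im² = 27/98`. A square root `x = z + 1` of such a `w` satisfies `4 (x.re)⁴ ≤ w.im²`,
which forces `|x.re| ≤ 5/7`, i.e. `z.re ∈ [-12/7, -2/7]`.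
-/

/-- The genus-`g` Verlinde matrix over ℂ: `M_{0,s} = 1` and
`M_{r,s} = (k+1+r)^{2s+2} - (k+1-r)^{2s+2}` for `r ≥ 1`. -/
def verlindeMatrix (g : ℕ) (k : ℂ) : Matrix (Fin g) (Fin g) ℂ :=
  fun r s => if (r : ℕ) = 0 then 1
    else (k + 1 + (r : ℕ)) ^ (2 * (s : ℕ) + 2) - (k + 1 - (r : ℕ)) ^ (2 * (s : ℕ) + 2)

/-- `Q(k) = 2^g det M(k) / ∏_{j=1}^g (2j)!`, the Verlinde/Hilbert polynomial of the
genus-`g` moduli space `M_C(2,L)`, viewed as a function on ℂ. -/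
noncomputable def Q (g : ℕ) (k : ℂ) : ℂ :=
  2 ^ g * (verlindeMatrix g k).det /
    (∏ j ∈ Finset.Icc 1 g, (Nat.factorial (2 * j) : ℂ))

lemma Q_three_eq (z : ℂ) :
    Q 3 z = (z + 1) ^ 2 * (14 * (z + 1) ^ 4 + 20 * (z + 1) ^ 2 + 11) / 45 := by
  have hprod : ∏ j ∈ Finset.Icc 1 3, (Nat.factorial (2 * j) : ℂ) = 34560 := by
    rw [show Finset.Icc 1 3 = {1, 2, 3} from rfl]
    norm_num [Nat.factorial]
  have hdet : (verlindeMatrix 3 z).det =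
      96 * ((z + 1) ^ 2 * (14 * (z + 1) ^ 4 + 20 * (z + 1) ^ 2 + 11)) := by
    simp only [Matrix.det_fin_three, verlindeMatrix]
    norm_num
    ring
  rw [Q, hprod, hdet]
  ring

lemma Complex.re_im_of_quadratic_eq_zero_of_discrim_neg {a b c : ℝ} {w : ℂ} (ha : 0 < a)
    (hdisc : discrim a b c < 0) (hw : a * w ^ 2 + b * w + c = 0) :
    2 * a * w.re + b = 0 ∧ 4 * a ^ 2 * w.im ^ 2 = -discrim a b c := by
  rw [discrim] at hdisc ⊢
  have hre : a * (w.re ^ 2 - w.im ^ 2) + b * w.re + c = 0 := by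
    simpa [sq] using congrArg Complex.re hw
  have him : w.im * (2 * a * w.re + b) = 0 := by
    have := congrArg Complex.im hw
    simp only [sq, add_im, mul_im, ofReal_re, ofReal_im, mul_re, zero_mul, add_zero,
      zero_im] at this
    linear_combination this
  have hline : 2 * a * w.re + b = 0 := by
    rcases mul_eq_zero.mp him with hreal | hline
    · rw [hreal] at hre
      nlinarith [sq_nonneg (2 * a * w.re + b)]
    · exact hline
  exact ⟨hline, by nlinarith⟩

lemma Complex.four_mul_re_pow_four_le (x : ℂ) (h : (x ^ 2).re ≤ 0) :
    4 * x.re ^ 4 ≤ (x ^ 2).im ^ 2 := by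
  simp only [sq, mul_re, mul_im] at h ⊢
  nlinarith [sq_nonneg x.re, sq_nonneg x.im, mul_nonneg (sq_nonneg x.re) (sq_nonneg x.im)]

theorem genus_three_narrow_canonical_strip :
    ∀ z : ℂ, Q 3 z = 0 → z.re ∈ Set.Icc (-12 / 7 : ℝ) (-2 / 7 : ℝ) := by
  intro z hQ
  suffices hx : |(z + 1).re| ≤ 5 / 7 by
    obtain ⟨hlow, hhigh⟩ := abs_le.mp hx
    rw [Complex.add_re, Complex.one_re] at hlow hhigh
    constructor <;> linarith
  rw [Q_three_eq, div_eq_zero_iff, mul_eq_zero] at hQ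
  rcases hQ with (hz | hquad) | h45
  · norm_num [pow_eq_zero_iff two_ne_zero |>.mp hz]
  · obtain ⟨hline, him⟩ := Complex.re_im_of_quadratic_eq_zero_of_discrim_neg
      (a := 14) (b := 20) (c := 11) (w := (z + 1) ^ 2) (by norm_num) (by norm_num [discrim])
      (by push_cast; linear_combination hquad)
    norm_num [discrim] at him
    have hquartic := Complex.four_mul_re_pow_four_le (z + 1) (by linarith)
    have hsq : (z + 1).re ^ 2 ≤ (5 / 7) ^ 2 := by nlinarith [sq_nonneg ((z + 1).re ^ 2)]
    exact abs_le_of_sq_le_sq' hsq (by norm_num) |> abs_le.mpr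
  · norm_num at h45
end

section
/- Let Q be the degree-12 polynomial 2^5 · det M(k)/∏_{j=1}^{5}(2j)!, where M(k) is the 5 × 5 matrix with M_{0,s} = 1 and M_{r,s} = (k+1+r)^{2s+2} - (k+1-r)^{2s+2} for 1 ≤ r ≤ 4, 0 ≤ s ≤ 4. Then every complex root of Q has real part lying in the closed interval [-2, 0]. -/
open Polynomial Finset

theorem Polynomial.norm_lt_of_isRoot_of_sum_lt {K : Type*} [NormedField K] {p : K[X]} {R : ℝ}
    (hR : 0 < R)
    (hp : ∑ i ∈ range p.natDegree, ‖p.coeff i‖ * R ^ i < ‖p.leadingCoeff‖ * R ^ p.natDegree)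
    {x : K} (hx : p.IsRoot x) : ‖x‖ < R := by
  by_contra! hRx
  set n := p.natDegree
  have hxn : 0 < ‖x‖ ^ n := pow_pos (hR.trans_le hRx) n
  have hlead : p.leadingCoeff * x ^ n = -∑ i ∈ range n, p.coeff i * x ^ i := by
    have := hx.eq_zero
    rw [eval_eq_sum_range, sum_range_succ] at this
    exact eq_neg_of_add_eq_zero_right this
  have hlead_le : ‖p.leadingCoeff‖ * ‖x‖ ^ n ≤ ∑ i ∈ range n, ‖p.coeff i‖ * ‖x‖ ^ i := by
    simpa [← norm_pow, ← norm_mul, hlead] using norm_sum_le _ _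
  have hterm : ∀ i ∈ range n, ‖p.coeff i‖ * ‖x‖ ^ i * R ^ n ≤ ‖p.coeff i‖ * R ^ i * ‖x‖ ^ n := by
    intro i hi
    have hin : i ≤ n := (mem_range.1 hi).le
    rw [← Nat.add_sub_cancel' hin, pow_add, pow_add]
    have : R ^ (n - i) ≤ ‖x‖ ^ (n - i) := pow_le_pow_left₀ hR.le hRx _
    have := mul_le_mul_of_nonneg_left this
      (by positivity : 0 ≤ ‖p.coeff i‖ * ‖x‖ ^ i * R ^ i)
    linarith
  have hlt := calc ‖p.leadingCoeff‖ * ‖x‖ ^ n * R ^ n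
      ≤ (∑ i ∈ range n, ‖p.coeff i‖ * ‖x‖ ^ i) * R ^ n := by gcongr
    _ ≤ (∑ i ∈ range n, ‖p.coeff i‖ * R ^ i) * ‖x‖ ^ n := by
        rw [sum_mul, sum_mul]; exact sum_le_sum hterm
    _ < ‖p.leadingCoeff‖ * R ^ n * ‖x‖ ^ n := by gcongr
  linarith

theorem Complex.abs_re_le_one_of_norm_sq_add_one_le_two {t : ℂ} (h : ‖t ^ 2 + 1‖ ≤ 2) :
    |t.re| ≤ 1 := by
  have hsq : ‖t ^ 2 + 1‖ ^ 2 =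
      (t.re ^ 2 + 1) ^ 2 + 2 * (t.re ^ 2 - 1) * t.im ^ 2 + t.im ^ 4 := by
    rw [Complex.sq_norm, Complex.normSq_apply]
    simp only [add_re, add_im, one_re, one_im, pow_two, mul_re, mul_im]
    ring
  have h4 : ‖t ^ 2 + 1‖ ^ 2 ≤ 4 := by nlinarith [norm_nonneg (t ^ 2 + 1)]
  rw [← sq_le_one_iff_abs_le_one]
  by_contra! hre
  nlinarith [sq_nonneg t.im, sq_nonneg (t.im ^ 2), mul_nonneg (sub_nonneg.2 hre.le) (sq_nonneg t.im)]

theorem Complex.norm_lt_two_of_quartic_eq_zero {v : ℂ}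
    (hv : 762 * v ^ 4 - 568 * v ^ 3 + 1248 * v ^ 2 + 480 * v + 575 = 0) : ‖v‖ < 2 := by
  set p : ℂ[X] := C 762 * X ^ 4 - C 568 * X ^ 3 + C 1248 * X ^ 2 + C 480 * X + C 575
  have hdeg : p.natDegree = 4 := by unfold p; compute_degree!
  refine p.norm_lt_of_isRoot_of_sum_lt two_pos ?_ (by simpa [p] using hv)
  simp only [hdeg, leadingCoeff, sum_range_succ, sum_range_zero, p, coeff_add, coeff_sub,
    coeff_C_mul, coeff_X_pow, coeff_X, coeff_C]
  norm_num

lemma det_verlindeMatrix_five (z : ℂ) : (verlindeMatrix 5 z).det =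
    11147673600 * (z + 1) ^ 4 *
      (762 * (z + 1) ^ 8 + 2480 * (z + 1) ^ 6 + 4116 * (z + 1) ^ 4 + 4320 * (z + 1) ^ 2 + 2497) := by
  simp only [Matrix.det_succ_row_zero, Fin.sum_univ_succ, verlindeMatrix, Fin.succAbove,
    Matrix.submatrix_apply, Matrix.submatrix_submatrix, Function.comp_apply, Matrix.det_unique,
    Finset.univ_unique, Finset.sum_singleton, Fin.isValue, Fin.coe_ofNat_eq_mod, Fin.val_succ,
    Fin.val_eq_zero, Fin.succ_zero_eq_one, Fin.succ_one_eq_two, Fin.reduceSucc, Fin.castSucc_zero,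
    Fin.castSucc_one, Fin.castSucc_succ, Fin.reduceCastSucc, Fin.succ_pos, Fin.reduceLT,
    Fin.lt_one_iff, Fin.reduceEq, Fin.default_eq_zero, lt_self_iff_false, not_lt_zero,
    Nat.reduceMod, Nat.zero_mod, Nat.one_mod, Nat.mod_succ, Nat.reduceAdd, Nat.reduceMul,
    Nat.cast_one, Nat.cast_ofNat, one_ne_zero, OfNat.ofNat_ne_zero, ↓reduceIte, zero_add]
  ring

lemma Q_five_eq (z : ℂ) : Q 5 z = (z + 1) ^ 4 *
    (762 * (z + 1) ^ 8 + 2480 * (z + 1) ^ 6 + 4116 * (z + 1) ^ 4 + 4320 * (z + 1) ^ 2 + 2497) /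
      14175 := by
  rw [Q, det_verlindeMatrix_five]
  norm_num [Finset.prod_Icc_succ_top, Nat.factorial]
  ring

theorem genus_five_canonical_strip :
    ∀ z : ℂ, Q 5 z = 0 → z.re ∈ Set.Icc (-2 : ℝ) 0 := by
  intro z hz
  obtain hroot | hoctic : (z + 1) ^ 4 = 0 ∨
      762 * (z + 1) ^ 8 + 2480 * (z + 1) ^ 6 + 4116 * (z + 1) ^ 4 + 4320 * (z + 1) ^ 2 + 2497 = 0 := by
    simpa [Q_five_eq] using hz
  · have : z = -1 := by linear_combination pow_eq_zero_iff (n := 4) (by norm_num) |>.1 hroot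
    norm_num [this]
  · have hquartic := Complex.norm_lt_two_of_quartic_eq_zero (v := (z + 1) ^ 2 + 1)
      (by linear_combination hoctic)
    have hre := abs_le.1 (Complex.abs_re_le_one_of_norm_sq_add_one_le_two hquartic.le)
    simp only [Complex.add_re, Complex.one_re] at hre
    constructor <;> linarith [hre.1, hre.2]
end
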